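/- arXiv:1305.1008 — 7 statements merged into one kernel-verified Lean document; each statement's English description precedes it below -/
import Mathlib

section
/- For every index i ∈ {1,…,n} the following identity holds: ∑_{j≠i} (λ(z_i) − λ(z_j))/(λ''(z_j)·z_{ij}⁴) = (1/24)·(C_{i3}² − C_{i4}). Equivalently, the quantity H_i := (1/2)·∑_{j≠i} (u_i − u_j)·γ_{ij}², where γ_{ij} = h_i h_j/z_{ij}² and h_i² = 1/λ''(z_i), equals (1/48)·h_i²·(C_{i3}² − C_{i4}). -/
/-!
Translate the critical point `z i` to `0`. Then `p' = κ X S` with `κ = n + 1` and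
`S = ∏_{j ≠ i} (X - z_j)`, and `p(0) - p(x) = x² m(x)` for a polynomial `m` of degree `n - 1`.
Since `p''(z_j) = κ z_j S'(z_j)`, the `j`-th summand is `m(z_j) / (κ z_j³ S'(z_j))`, the residue
of `m / (κ X³ S)` at `z_j`. By the residue theorem the sum is minus the residue at `0` (that at
`∞` vanishes for degree reasons), i.e. `-1/κ` times the coefficient of `X²` in the power series
`m / S`. Both `m` and `S` are read off the Taylor coefficients `p₂, p₃, p₄` of `p` at `z i`.
The residue theorem is made algebraic by subtracting `S R`, where `R` is the quadratic Taylor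
polynomial of `m / S` at `0`: the remainder is divisible by `X³`, and Lagrange interpolation
computes the sum from its leading coefficient.
-/

open Polynomial Finset

namespace Polynomial

section CommRing

variable {R : Type*} [CommRing R]

theorem derivative_taylor (r : R) (f : R[X]) :
    derivative (taylor r f) = taylor r (derivative f) := by
  rw [taylor_apply, taylor_apply, derivative_comp, derivative_X_add_C, one_mul]

theorem iterate_derivative_taylor (r : R) (f : R[X]) (k : ℕ) :
    derivative^[k] (taylor r f) = taylor r (derivative^[k] f) :=
  Function.Commute.iterate_left (fun g => derivative_taylor r g) k f

theorem taylor_X_sub_C (r a : R) : taylor r (X - C a) = X - C (a - r) := by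
  rw [map_sub, taylor_X, taylor_C, map_sub]
  ring

theorem eval_zero_iterate_derivative (f : R[X]) (k : ℕ) :
    (derivative^[k] f).eval 0 = k.factorial * f.coeff k := by
  rw [← coeff_zero_eq_eval_zero, coeff_iterate_derivative, zero_add, Nat.descFactorial_self,
    nsmul_eq_mul]

theorem eval_eq_coeff_zero_add_coeff_one_mul_add_sq_mul (f : R[X]) (x : R) :
    f.eval x = f.coeff 0 + f.coeff 1 * x + x ^ 2 * (divX (divX f)).eval x := by
  conv_lhs => rw [← divX_mul_X_add f, ← divX_mul_X_add (divX f)]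
  simp only [eval_add, eval_mul, eval_X, eval_C, coeff_divX]
  ring

theorem X_pow_three_dvd_sub_mul_quadratic {m S : R[X]} {r₀ r₁ r₂ : R}
    (h₀ : m.coeff 0 = S.coeff 0 * r₀)
    (h₁ : m.coeff 1 = S.coeff 1 * r₀ + S.coeff 0 * r₁)
    (h₂ : m.coeff 2 = S.coeff 2 * r₀ + S.coeff 1 * r₁ + S.coeff 0 * r₂) :
    X ^ 3 ∣ m - S * (C r₀ + C r₁ * X + C r₂ * X ^ 2) := by
  rw [X_pow_dvd_iff]
  intro d hd
  have hS : S * (C r₀ + C r₁ * X + C r₂ * X ^ 2) =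
      C r₀ * S + C r₁ * (X * S) + C r₂ * (X ^ 2 * S) := by
    ring
  rw [coeff_sub, hS]
  interval_cases d <;> simp [coeff_X_mul, coeff_X_pow_mul', h₀, h₁, h₂] <;> ring

end CommRing

section Field

variable {F : Type*} [Field F]

theorem eval_zero_sub_eval_div_eq_of_derivative_eq {q S : F[X]} {κ x : F} (hκ : κ ≠ 0)
    (hq : derivative q = C κ * (X * S)) (hx : x ≠ 0) (hSx : S.eval x = 0) :
    (q.eval 0 - q.eval x) / ((derivative^[2] q).eval x * (0 - x) ^ 4) =
      -(divX (divX q)).eval x / (x ^ 3 * (derivative S).eval x) / κ := by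
  have hq₁ : q.coeff 1 = 0 := by simpa [coeff_derivative] using congrArg (coeff · 0) hq
  have hq₂ : (derivative^[2] q).eval x = κ * (x * (derivative S).eval x) := by
    rw [Function.iterate_succ_apply', Function.iterate_one, hq]
    simp [hSx]
  rw [eval_eq_coeff_zero_add_coeff_one_mul_add_sq_mul q x, hq₁, hq₂, ← coeff_zero_eq_eval_zero]
  field_simp
  ring

end Field

end Polynomial

namespace Lagrange

section CommRing

variable {R : Type*} [CommRing R] {ι : Type*} {s : Finset ι} {v : ι → R}

theorem taylor_nodal (r : R) : taylor r (nodal s v) = nodal s (fun i => v i - r) := by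
  change taylorAlgHom r _ = _
  rw [nodal, nodal, map_prod]
  exact prod_congr rfl fun i _ => taylor_X_sub_C r (v i)

end CommRing

variable {F : Type*} [Field F] {ι : Type*} {s : Finset ι} {v : ι → F}

theorem eq_C_leadingCoeff_mul_nodal {f : F[X]} (hvs : Set.InjOn v s) (hf : f.natDegree = #s)
    (hroots : ∀ i ∈ s, f.eval (v i) = 0) : f = C f.leadingCoeff * nodal s v := by
  rcases eq_or_ne f 0 with rfl | hf0
  · simp
  have hdeg : f.degree = #s := by rw [degree_eq_natDegree hf0, hf]
  refine eq_of_degree_sub_lt_of_eval_index_eq s hvs ?_ fun i hi => ?_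
  · rw [← hdeg]
    refine degree_sub_lt_left ?_ hf0 ?_
    · rw [degree_C_mul (leadingCoeff_ne_zero.2 hf0), degree_nodal, hdeg]
    · rw [leadingCoeff_C_mul_of_isUnit, nodal_monic.leadingCoeff, mul_one]
      exact (leadingCoeff_ne_zero.2 hf0).isUnit
  · rw [hroots i hi, eval_mul, eval_nodal_at_node hi, mul_zero]

variable [DecidableEq ι]

theorem sum_eval_div_pow_mul_eval_derivative_nodal (hvs : Set.InjOn v s)
    (hv0 : ∀ i ∈ s, v i ≠ 0) {g : F[X]} {d : ℕ} (hdvd : X ^ d ∣ g) (hg : g.natDegree < #s + d) :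
    ∑ i ∈ s, g.eval (v i) / (v i ^ d * (derivative (nodal s v)).eval (v i)) =
      g.coeff (#s + d - 1) := by
  obtain ⟨Q, rfl⟩ := hdvd
  rcases eq_or_ne Q 0 with rfl | hQ0
  · simp
  rw [natDegree_X_pow_mul d hQ0] at hg
  have hQ : Q.degree < #s := (natDegree_lt_iff_degree_lt hQ0).1 (by omega)
  rw [coeff_X_pow_mul', if_pos (by omega), show #s + d - 1 - d = #s - 1 by omega,
    coeff_eq_sum hvs hQ]
  refine sum_congr rfl fun i hi => ?_
  rw [eval_mul, eval_pow, eval_X, eval_nodal_derivative_eval_node_eq hi, eval_nodal,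
    mul_div_mul_left _ _ (pow_ne_zero _ (hv0 i hi))]

/-- The residues of `m / (X ^ d * nodal s v)` at the nodes sum to minus the residues at `0` and
at `∞`, provided `R` agrees with `m / nodal s v` to order `d` at `0`. -/
theorem sum_eval_div_pow_mul_eval_derivative_nodal_of_dvd_sub (hvs : Set.InjOn v s)
    (hv0 : ∀ i ∈ s, v i ≠ 0) {m R : F[X]} {d : ℕ} (hd : 1 ≤ d) (hm : m.natDegree < #s + d)
    (hR : R.natDegree < d) (hdvd : X ^ d ∣ m - nodal s v * R) :
    ∑ i ∈ s, m.eval (v i) / (v i ^ d * (derivative (nodal s v)).eval (v i)) =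
      m.coeff (#s + d - 1) - R.coeff (d - 1) := by
  have hg : (m - nodal s v * R).natDegree < #s + d := by
    refine (natDegree_sub_le _ _).trans_lt (max_lt hm (natDegree_mul_le.trans_lt ?_))
    rw [natDegree_nodal]
    omega
  have htop : (nodal s v * R).coeff (#s + (d - 1)) = R.coeff (d - 1) := by
    rw [coeff_mul_add_eq_of_natDegree_le (natDegree_nodal (R := F)).le
      (show R.natDegree ≤ d - 1 by omega), ← natDegree_nodal (s := s) (v := v),
      nodal_monic.coeff_natDegree, one_mul]
  rw [← htop, show #s + (d - 1) = #s + d - 1 by omega, ← coeff_sub,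
    ← sum_eval_div_pow_mul_eval_derivative_nodal hvs hv0 hdvd hg]
  refine sum_congr rfl fun i hi => ?_
  rw [eval_sub, eval_mul, eval_nodal_at_node hi, zero_mul, sub_zero]

variable [CharZero F]

theorem sum_eval_sub_div_eq_of_derivative_eq_C_mul_X_mul_nodal {q : F[X]} {κ : F} (hκ : κ ≠ 0)
    (hvs : Set.InjOn v s) (hv0 : ∀ i ∈ s, v i ≠ 0)
    (hq : derivative q = C κ * (X * nodal s v)) (h₂ : q.coeff 2 ≠ 0) :
    ∑ i ∈ s, (q.eval 0 - q.eval (v i)) / ((derivative^[2] q).eval (v i) * (0 - v i) ^ 4) =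
      (3 * q.coeff 3 ^ 2 - 4 * q.coeff 2 * q.coeff 4) / (8 * q.coeff 2 ^ 2) := by
  set S := nodal s v
  have hS : ∀ t : ℕ, S.coeff t = (t + 2) * q.coeff (t + 2) / κ := by
    intro t
    have h := congrArg (coeff · (t + 1)) hq
    simp only [coeff_derivative, coeff_C_mul, coeff_X_mul] at h
    push_cast at h
    rw [eq_div_iff hκ, mul_comm, ← h]
    ring
  set m := -divX (divX q)
  have hm : ∀ t, m.coeff t = -q.coeff (t + 2) := fun t => by simp [m, coeff_divX]
  have hmdeg : m.natDegree ≤ #s := natDegree_le_iff_coeff_eq_zero.2 fun t ht => by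
    have h := hS t
    rw [coeff_eq_zero_of_natDegree_lt (by rwa [natDegree_nodal]), eq_comm, div_eq_zero_iff,
      or_iff_left hκ, mul_eq_zero, or_iff_right (by norm_cast)] at h
    rw [hm, h, neg_zero]
  -- `R` is the quadratic Taylor polynomial of `m / S` at `0`.
  have hdvd := X_pow_three_dvd_sub_mul_quadratic (m := m) (S := S)
    (r₀ := -κ / 2) (r₁ := κ * q.coeff 3 / (4 * q.coeff 2))
    (r₂ := κ * (4 * q.coeff 2 * q.coeff 4 - 3 * q.coeff 3 ^ 2) / (8 * q.coeff 2 ^ 2))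
    (by rw [hm, hS]; field_simp; ring) (by rw [hm, hS, hS]; field_simp; ring)
    (by rw [hm, hS, hS, hS]; field_simp; ring)
  have key := sum_eval_div_pow_mul_eval_derivative_nodal_of_dvd_sub hvs hv0 (by norm_num)
    (by omega) (by compute_degree!) hdvd
  have hterm : ∀ i ∈ s,
      (q.eval 0 - q.eval (v i)) / ((derivative^[2] q).eval (v i) * (0 - v i) ^ 4) =
        m.eval (v i) / (v i ^ 3 * (derivative S).eval (v i)) / κ := fun i hi => by
    rw [eval_zero_sub_eval_div_eq_of_derivative_eq hκ hq (hv0 i hi) (eval_nodal_at_node hi),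
      eval_neg]
  rw [sum_congr rfl hterm, ← sum_div, key, coeff_eq_zero_of_natDegree_lt (by omega)]
  simp only [Nat.add_one_sub_one, coeff_add, coeff_C_succ, coeff_mul_X, add_zero, coeff_C_mul,
    coeff_X_pow, ↓reduceIte, mul_one, zero_add, zero_sub]
  field_simp
  ring

theorem sum_eval_sub_div_eq_of_derivative_eq_C_mul_nodal {p : F[X]} {κ a : F} (hκ : κ ≠ 0)
    (hvs : Set.InjOn v s) (hva : ∀ i ∈ s, v i ≠ a)
    (hp : derivative p = C κ * ((X - C a) * nodal s v)) (h₂ : (derivative^[2] p).eval a ≠ 0) :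
    ∑ i ∈ s, (p.eval a - p.eval (v i)) / ((derivative^[2] p).eval (v i) * (a - v i) ^ 4) =
      1 / 24 * (((derivative^[3] p).eval a / (derivative^[2] p).eval a) ^ 2 -
        (derivative^[4] p).eval a / (derivative^[2] p).eval a) := by
  have hderiv : ∀ k, (derivative^[k] p).eval a = k.factorial * (taylor a p).coeff k :=
    fun k => by
      rw [← eval_zero_iterate_derivative, iterate_derivative_taylor, taylor_eval, zero_add]
  have hq : derivative (taylor a p) = C κ * (X * nodal s (fun i => v i - a)) := by
    rw [derivative_taylor, hp, taylor_mul, taylor_mul, taylor_C, taylor_X_sub_C, sub_self, C_0,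
      sub_zero, taylor_nodal]
  have key := sum_eval_sub_div_eq_of_derivative_eq_C_mul_X_mul_nodal hκ
    (fun i hi j hj hij => hvs hi hj (sub_left_injective hij))
    (fun i hi => sub_ne_zero.2 (hva i hi)) hq
    (by rw [hderiv] at h₂; exact right_ne_zero_of_mul h₂)
  rw [hderiv, hderiv, hderiv]
  convert key using 1
  · refine sum_congr rfl fun i _ => ?_
    rw [taylor_eval_sub, ← taylor_eval_sub a (derivative^[2] p) (v i),
      ← iterate_derivative_taylor, taylor_eval, zero_add]
    ring
  · rw [hderiv] at h₂
    simp only [Nat.factorial, Nat.succ_eq_add_one, Nat.reduceAdd, zero_add, mul_one,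
      Nat.reduceMul, Nat.cast_ofNat]
    field_simp
    ring

end Lagrange

theorem stmt_4_general (n : ℕ) (p : Polynomial ℂ)
    (hp : p.Monic) (hdeg : p.natDegree = n + 1)
    (z : Fin n → ℂ) (hz : Function.Injective z)
    (hcrit : ∀ i, (derivative p).eval (z i) = 0)
    (hnd : ∀ i, (derivative^[2] p).eval (z i) ≠ 0)
    (C : Fin n → ℕ → ℂ)
    (hC : ∀ i k, C i k = ((derivative^[k] p).eval (z i)) / ((derivative^[2] p).eval (z i)))
    (i : Fin n) :
    ∑ j ∈ univ.filter (fun j => j ≠ i),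
        (p.eval (z i) - p.eval (z j)) / ((derivative^[2] p).eval (z j) * (z i - z j) ^ 4)
      = (1 / 24) * ((C i 3) ^ 2 - C i 4) := by
  have hlead : (derivative p).leadingCoeff = n + 1 := by
    rw [leadingCoeff, natDegree_derivative, hdeg, Nat.add_sub_cancel, coeff_derivative, ← hdeg,
      hp.coeff_natDegree, one_mul]
  have hp' : derivative p = Polynomial.C ((n : ℂ) + 1) * Lagrange.nodal univ z := hlead ▸
    Lagrange.eq_C_leadingCoeff_mul_nodal hz.injOn (by simp [hdeg]) fun j _ => hcrit j
  rw [Lagrange.nodal_eq_mul_nodal_erase (mem_univ i)] at hp'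
  rw [filter_ne', hC, hC]
  exact Lagrange.sum_eval_sub_div_eq_of_derivative_eq_C_mul_nodal (Nat.cast_add_one_ne_zero n)
    hz.injOn (fun j hj => hz.ne (ne_of_mem_erase hj)) hp' (hnd i)

/-- Identity (2.16)/R₃(4): for every index `i`,
`∑_{{j≠i}} (λ(z_i) − λ(z_j))/(λ''(z_j)·z_ij⁴) = (1/24)·(C_i3² − C_i4)`,
i.e. `H_i = (1/48)·h_i²·(C_i3² − C_i4)` where `h_i² = 1/λ''(z_i)`. -/
theorem stmt_4 (n : ℕ) (hn : 1 ≤ n) (p : Polynomial ℂ)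
    (hp : p.Monic) (hdeg : p.natDegree = n + 1)
    (z : Fin n → ℂ) (hz : Function.Injective z)
    (hcrit : ∀ i, (derivative p).eval (z i) = 0)
    (hnd : ∀ i, (derivative^[2] p).eval (z i) ≠ 0)
    (C : Fin n → ℕ → ℂ)
    (hC : ∀ i k, C i k = ((derivative^[k] p).eval (z i)) / ((derivative^[2] p).eval (z i)))
    (i : Fin n) :
    ∑ j ∈ univ.filter (fun j => j ≠ i),
        (p.eval (z i) - p.eval (z j)) / ((derivative^[2] p).eval (z j) * (z i - z j) ^ 4)
      = (1 / 24) * ((C i 3) ^ 2 - C i 4) :=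
  stmt_4_general n p hp hdeg z hz hcrit hnd C hC i
end

section
/- For every index i ∈ {1,…,n} the following identity holds: ∑_{k≠i} 1/z_{ik}² = C_{i3}²/4 − C_{i4}/3. -/
/-!
`λ'` has degree at most `n` and vanishes at the `n` distinct points `z_k`, so
`λ' = c (X - z_i) Q` with `Q = ∏_{k ≠ i} (X - z_k)`. Differentiating this product gives
`λ^{(m+2)}(z_i) = c (m+1) Q^{(m)}(z_i)`, hence `C_{i3} = 2 Q'/Q` and `C_{i4} = 3 Q''/Q` at `z_i`.
Logarithmic differentiation of `Q` gives `Q'/Q = S` and `Q''/Q = S² - ∑_{k≠i} 1/z_{ik}²`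
with `S = ∑_{k≠i} 1/z_{ik}`, and `S²` cancels in `C_{i3}²/4 - C_{i4}/3`.
-/

open Polynomial Finset

namespace Polynomial

variable {K : Type*} [Field K]

theorem eq_C_leadingCoeff_mul_prod_X_sub_C {ι : Type*} [Fintype ι] {q : K[X]} {z : ι → K}
    (hz : Function.Injective z) (hroot : ∀ i, q.IsRoot (z i))
    (hdeg : q.natDegree ≤ Fintype.card ι) :
    q = C q.leadingCoeff * ∏ i, (X - C (z i)) := by
  refine eq_leadingCoeff_mul_of_monic_of_dvd_of_natDegree_le (monic_prod_X_sub_C z univ) ?_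
    (by simpa using hdeg)
  exact Finset.prod_dvd_of_coprime ((pairwise_coprime_X_sub_C hz).set_pairwise _)
    fun i _ => dvd_iff_isRoot.2 (hroot i)

theorem iterate_derivative_X_sub_C_mul (y : K) (Q : K[X]) (m : ℕ) :
    derivative^[m + 1] ((X - C y) * Q) =
      (X - C y) * derivative^[m + 1] Q + (m + 1) • derivative^[m] Q := by
  induction m with
  | zero => simp [derivative_mul, add_comm]
  | succ m ih =>
    rw [Function.iterate_succ_apply', ih, derivative_add, derivative_mul, map_nsmul,
      derivative_sub, derivative_X, derivative_C, sub_zero, one_mul,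
      ← Function.iterate_succ_apply' derivative (m + 1),
      ← Function.iterate_succ_apply' derivative m, succ_nsmul _ (m + 1)]
    abel

theorem eval_iterate_derivative_X_sub_C_mul_self (y : K) (Q : K[X]) (m : ℕ) :
    (derivative^[m + 1] ((X - C y) * Q)).eval y = (m + 1) * (derivative^[m] Q).eval y := by
  simp [iterate_derivative_X_sub_C_mul]

section LogDerivative

variable {ι : Type*} (s : Finset ι) (a : ι → K) {x : K}

theorem eval_derivative_prod_X_sub_C (hx : ∀ k ∈ s, x ≠ a k) :
    (derivative (∏ k ∈ s, (X - C (a k)))).eval x =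
      (∏ k ∈ s, (X - C (a k))).eval x * ∑ k ∈ s, (x - a k)⁻¹ := by
  classical
  induction s using Finset.induction_on with
  | empty => simp
  | insert b s hb ih =>
    have hxb : x - a b ≠ 0 := sub_ne_zero.2 (hx b (mem_insert_self b s))
    have hQ := ih fun k hk => hx k (mem_insert_of_mem hk)
    rw [prod_insert hb, sum_insert hb, derivative_mul]
    simp only [eval_add, eval_mul, eval_sub, eval_X, eval_C, derivative_sub, derivative_X,
      derivative_C, sub_zero, eval_one, hQ]
    field_simp

theorem eval_iterate_derivative_two_prod_X_sub_C (hx : ∀ k ∈ s, x ≠ a k) :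
    (derivative^[2] (∏ k ∈ s, (X - C (a k)))).eval x =
      (∏ k ∈ s, (X - C (a k))).eval x *
        ((∑ k ∈ s, (x - a k)⁻¹) ^ 2 - ∑ k ∈ s, (x - a k)⁻¹ ^ 2) := by
  classical
  induction s using Finset.induction_on with
  | empty => simp
  | insert b s hb ih =>
    have hxb : x - a b ≠ 0 := sub_ne_zero.2 (hx b (mem_insert_self b s))
    have hs : ∀ k ∈ s, x ≠ a k := fun k hk => hx k (mem_insert_of_mem hk)
    rw [prod_insert hb, sum_insert hb, sum_insert hb, iterate_derivative_X_sub_C_mul]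
    simp only [eval_add, eval_mul, eval_sub, eval_X, eval_C, nsmul_eq_mul, eval_natCast,
      Function.iterate_one, ih hs, eval_derivative_prod_X_sub_C s a hs]
    push_cast
    field_simp
    ring

end LogDerivative

end Polynomial

theorem stmt_5_general (n : ℕ) (p : Polynomial ℂ)
    (hdeg : p.natDegree = n + 1)
    (z : Fin n → ℂ) (hz : Function.Injective z)
    (hcrit : ∀ i, (derivative p).eval (z i) = 0)
    (hnd : ∀ i, (derivative^[2] p).eval (z i) ≠ 0)
    (C : Fin n → ℕ → ℂ)
    (hC : ∀ i k, C i k = ((derivative^[k] p).eval (z i)) / ((derivative^[2] p).eval (z i)))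
    (i : Fin n) :
    ∑ k ∈ univ.filter (fun k => k ≠ i), 1 / (z i - z k) ^ 2
      = (C i 3) ^ 2 / 4 - C i 4 / 3 := by
  set Q := ∏ k ∈ univ.erase i, (X - Polynomial.C (z k))
  set c := (derivative p).leadingCoeff
  have hp' : derivative p = Polynomial.C c * ((X - Polynomial.C (z i)) * Q) := by
    rw [mul_prod_erase _ (fun k => X - Polynomial.C (z k)) (mem_univ i)]
    exact eq_C_leadingCoeff_mul_prod_X_sub_C hz hcrit
      ((natDegree_derivative_le p).trans (by simp [hdeg]))
  have hpQ (m : ℕ) :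
      (derivative^[m + 2] p).eval (z i) = c * ((m + 1) * (derivative^[m] Q).eval (z i)) := by
    rw [Function.iterate_succ_apply, hp', iterate_derivative_C_mul, eval_mul, eval_C,
      eval_iterate_derivative_X_sub_C_mul_self]
  have hzi : ∀ k ∈ univ.erase i, z i ≠ z k := fun k hk => hz.ne (ne_of_mem_erase hk).symm
  set S := ∑ k ∈ univ.erase i, (z i - z k)⁻¹
  set W := ∑ k ∈ univ.erase i, (z i - z k)⁻¹ ^ 2
  have hQ1 : (derivative Q).eval (z i) = Q.eval (z i) * S :=
    eval_derivative_prod_X_sub_C _ _ hzi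
  have hQ2 : (derivative^[2] Q).eval (z i) = Q.eval (z i) * (S ^ 2 - W) :=
    eval_iterate_derivative_two_prod_X_sub_C _ _ hzi
  have h2 : (derivative^[2] p).eval (z i) = c * Q.eval (z i) := by simpa using hpQ 0
  have h3 : (derivative^[3] p).eval (z i) = c * (2 * (derivative Q).eval (z i)) := by
    simpa [one_add_one_eq_two] using hpQ 1
  have h4 : (derivative^[4] p).eval (z i) = c * (3 * (derivative^[2] Q).eval (z i)) := by
    simpa [show (2 + 1 : ℂ) = 3 by norm_num] using hpQ 2
  obtain ⟨hc, hQ⟩ : c ≠ 0 ∧ Q.eval (z i) ≠ 0 := mul_ne_zero_iff.1 (h2 ▸ hnd i)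
  have hW : ∑ k ∈ univ.filter (fun k => k ≠ i), 1 / (z i - z k) ^ 2 = W := by
    simp only [filter_ne', one_div, inv_pow, W]
  rw [hW, hC, hC, h2, h3, h4, hQ1, hQ2]
  field_simp
  ring

/-- Residue formula R₁(2): for every index `i`,
`∑_{{k≠i}} 1/z_ik² = C_i3²/4 − C_i4/3`. -/
theorem stmt_5 (n : ℕ) (hn : 1 ≤ n) (p : Polynomial ℂ)
    (hp : p.Monic) (hdeg : p.natDegree = n + 1)
    (z : Fin n → ℂ) (hz : Function.Injective z)
    (hcrit : ∀ i, (derivative p).eval (z i) = 0)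
    (hnd : ∀ i, (derivative^[2] p).eval (z i) ≠ 0)
    (C : Fin n → ℕ → ℂ)
    (hC : ∀ i k, C i k = ((derivative^[k] p).eval (z i)) / ((derivative^[2] p).eval (z i)))
    (i : Fin n) :
    ∑ k ∈ univ.filter (fun k => k ≠ i), 1 / (z i - z k) ^ 2
      = (C i 3) ^ 2 / 4 - C i 4 / 3 :=
  stmt_5_general n p hdeg z hz hcrit hnd C hC i
end

section
/- For every index i ∈ {1,…,n} the following identity holds: ∑_{k≠i} 1/z_{ik}³ = (1/8)·(C_{i3}³ − 2C_{i3}C_{i4} + C_{i5}). -/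
open Polynomial Finset

/-!
Since `λ' = c · (X - z_i) · r` with `r = ∏_{k ≠ i} (X - z_k)`, Leibniz' rule gives
`λ^{(m+2)}(z_i) = c (m + 1) r^{(m)}(z_i)`. Differentiating `r` factor by factor, the ratios
`r^{(m)}(z_i) / r(z_i)` are polynomials in the power sums `S_j = ∑_{k ≠ i} z_{ik}^{-j}`:
`C_{i3} = 2 S₁`, `C_{i4} = 3 (S₁² - S₂)`, `C_{i5} = 4 (S₁³ - 3 S₁ S₂ + 2 S₃)`,
and `C_{i3}³ - 2 C_{i3} C_{i4} + C_{i5} = 8 S₃`.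
-/

theorem Polynomial.eq_C_leadingCoeff_mul_prod_X_sub_C_of_injective {K : Type*} [Field K]
    {n : ℕ} {q : K[X]} (hq : q ≠ 0) (hdeg : q.natDegree ≤ n) {z : Fin n → K}
    (hz : Function.Injective z) (hroot : ∀ k, q.IsRoot (z k)) :
    q = C q.leadingCoeff * ∏ k, (X - C (z k)) := by
  set S : Multiset K := univ.val.map z
  have hcard : Multiset.card S = n := by simp [S]
  have hle : S ≤ q.roots := (Multiset.le_iff_subset (univ.nodup.map hz)).2 fun x hx => by
    obtain ⟨k, -, rfl⟩ := Multiset.mem_map.1 hx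
    exact (mem_roots hq).2 (hroot k)
  have hroots : S = q.roots :=
    Multiset.eq_of_le_of_card_le hle ((card_roots' q).trans (hcard ▸ hdeg))
  have hnat : Multiset.card q.roots = q.natDegree :=
    le_antisymm (card_roots' q) (hroots ▸ hcard ▸ hdeg)
  calc q = C q.leadingCoeff * (q.roots.map fun x => X - C x).prod :=
        (C_leadingCoeff_mul_prod_multiset_X_sub_C hnat).symm
    _ = C q.leadingCoeff * ∏ k, (X - C (z k)) := by rw [← hroots, Multiset.map_map]; rfl

theorem Polynomial.iterate_derivative_succ_X_sub_C_mul {R : Type*} [CommRing R] (a : R)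
    (r : R[X]) (m : ℕ) :
    derivative^[m + 1] ((X - C a) * r)
      = (X - C a) * derivative^[m + 1] r + (m + 1 : R[X]) * derivative^[m] r := by
  induction m with
  | zero =>
    simp only [zero_add, Function.iterate_one, Function.iterate_zero_apply, derivative_mul,
      derivative_sub, derivative_X, derivative_C, sub_zero, one_mul, Nat.cast_zero]
    ring
  | succ m ih =>
    rw [Function.iterate_succ_apply', ih, Function.iterate_succ_apply' _ (m + 1),
      Function.iterate_succ_apply' _ m]
    simp only [derivative_add, derivative_mul, derivative_sub, derivative_X, derivative_C]
    push_cast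
    simp only [derivative_natCast, derivative_one]
    ring

theorem Polynomial.eval_iterate_derivative_succ_X_sub_C_mul {R : Type*} [CommRing R] (a : R)
    (r : R[X]) (m : ℕ) :
    eval a (derivative^[m + 1] ((X - C a) * r)) = (m + 1) * eval a (derivative^[m] r) := by
  simp [iterate_derivative_succ_X_sub_C_mul]

section ProdXSubC

variable {K ι : Type*} [Field K] [DecidableEq ι] (b : ι → K) {a : K}

theorem Polynomial.derivative_prod_X_sub_C (s : Finset ι) :
    derivative (∏ k ∈ s, (X - C (b k))) = ∑ j ∈ s, ∏ k ∈ s.erase j, (X - C (b k)) := by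
  simp [derivative_prod_finset]

theorem Polynomial.eval_prod_erase_X_sub_C {s : Finset ι} {j : ι} (hj : j ∈ s)
    (hab : a ≠ b j) :
    eval a (∏ k ∈ s.erase j, (X - C (b k)))
      = eval a (∏ k ∈ s, (X - C (b k))) * (a - b j)⁻¹ := by
  rw [← mul_prod_erase s _ hj, eval_mul, eval_sub, eval_X, eval_C, mul_comm, ← mul_assoc,
    inv_mul_cancel₀ (sub_ne_zero.2 hab), one_mul]

/-- `F t` plays the role of the ratio `P_t^{(m)}(a) / P_t(a)` for `P_t = ∏_{k ∈ t} (X - b k)`. -/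
theorem Polynomial.eval_iterate_derivative_succ_prod_X_sub_C (m : ℕ) (F : Finset ι → K)
    {s : Finset ι} (hab : ∀ k ∈ s, a ≠ b k)
    (hF : ∀ j ∈ s, eval a (derivative^[m] (∏ k ∈ s.erase j, (X - C (b k))))
      = eval a (∏ k ∈ s.erase j, (X - C (b k))) * F (s.erase j)) :
    eval a (derivative^[m + 1] (∏ k ∈ s, (X - C (b k))))
      = eval a (∏ k ∈ s, (X - C (b k))) * ∑ j ∈ s, (a - b j)⁻¹ * F (s.erase j) := by
  rw [Function.iterate_succ_apply, derivative_prod_X_sub_C, iterate_derivative_sum,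
    eval_finsetSum, mul_sum]
  refine sum_congr rfl fun j hj => ?_
  rw [hF j hj, eval_prod_erase_X_sub_C b hj (hab j hj)]
  ring

theorem Polynomial.eval_derivative_prod_X_sub_C_s6 {s : Finset ι} (hab : ∀ k ∈ s, a ≠ b k) :
    eval a (derivative (∏ k ∈ s, (X - C (b k))))
      = eval a (∏ k ∈ s, (X - C (b k))) * ∑ j ∈ s, (a - b j)⁻¹ := by
  simpa using eval_iterate_derivative_succ_prod_X_sub_C b 0 (fun _ => 1) hab (by simp)

theorem Polynomial.eval_iterate_derivative_two_prod_X_sub_C_s6 {s : Finset ι}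
    (hab : ∀ k ∈ s, a ≠ b k) :
    eval a (derivative^[2] (∏ k ∈ s, (X - C (b k))))
      = eval a (∏ k ∈ s, (X - C (b k)))
        * ((∑ j ∈ s, (a - b j)⁻¹) ^ 2 - ∑ j ∈ s, ((a - b j)⁻¹) ^ 2) := by
  rw [eval_iterate_derivative_succ_prod_X_sub_C b 1 (fun t => ∑ j ∈ t, (a - b j)⁻¹) hab
    fun j _ => eval_derivative_prod_X_sub_C_s6 b fun k hk => hab k (mem_of_mem_erase hk)]
  congr 1
  set w : ι → K := fun j => (a - b j)⁻¹
  calc ∑ j ∈ s, w j * ∑ l ∈ s.erase j, w l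
      = ∑ j ∈ s, ((∑ l ∈ s, w l) * w j - w j ^ 2) :=
        sum_congr rfl fun j hj => by rw [sum_erase_eq_sub hj]; ring
    _ = _ := by rw [sum_sub_distrib, ← mul_sum]; ring

theorem Polynomial.eval_iterate_derivative_three_prod_X_sub_C {s : Finset ι}
    (hab : ∀ k ∈ s, a ≠ b k) :
    eval a (derivative^[3] (∏ k ∈ s, (X - C (b k))))
      = eval a (∏ k ∈ s, (X - C (b k)))
        * ((∑ j ∈ s, (a - b j)⁻¹) ^ 3
          - 3 * (∑ j ∈ s, (a - b j)⁻¹) * ∑ j ∈ s, ((a - b j)⁻¹) ^ 2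
          + 2 * ∑ j ∈ s, ((a - b j)⁻¹) ^ 3) := by
  rw [eval_iterate_derivative_succ_prod_X_sub_C b 2
    (fun t => (∑ j ∈ t, (a - b j)⁻¹) ^ 2 - ∑ j ∈ t, ((a - b j)⁻¹) ^ 2) hab
    fun j _ => eval_iterate_derivative_two_prod_X_sub_C_s6 b fun k hk => hab k (mem_of_mem_erase hk)]
  congr 1
  set w : ι → K := fun j => (a - b j)⁻¹
  set S₁ := ∑ l ∈ s, w l
  set S₂ := ∑ l ∈ s, w l ^ 2
  calc ∑ j ∈ s, w j * ((∑ l ∈ s.erase j, w l) ^ 2 - ∑ l ∈ s.erase j, w l ^ 2)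
      = ∑ j ∈ s, ((S₁ ^ 2 - S₂) * w j - 2 * S₁ * w j ^ 2 + 2 * w j ^ 3) :=
        sum_congr rfl fun j hj => by
          rw [sum_erase_eq_sub hj, sum_erase_eq_sub (f := fun l => w l ^ 2) hj]; ring
    _ = _ := by rw [sum_add_distrib, sum_sub_distrib, ← mul_sum, ← mul_sum, ← mul_sum]; ring

end ProdXSubC

theorem stmt_6_general (n : ℕ) (p : Polynomial ℂ)
    (hdeg : p.natDegree = n + 1)
    (z : Fin n → ℂ) (hz : Function.Injective z)
    (hcrit : ∀ i, (derivative p).eval (z i) = 0)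
    (C : Fin n → ℕ → ℂ)
    (hC : ∀ i k, C i k = ((derivative^[k] p).eval (z i)) / ((derivative^[2] p).eval (z i)))
    (i : Fin n) :
    ∑ k ∈ univ.filter (fun k => k ≠ i), 1 / (z i - z k) ^ 3
      = (1 / 8) * ((C i 3) ^ 3 - 2 * C i 3 * C i 4 + C i 5) := by
  set r := ∏ k ∈ univ.erase i, (X - Polynomial.C (z k))
  set c := (derivative p).leadingCoeff
  have hp' : derivative p ≠ 0 := derivative_ne_zero.2 (by omega)
  have hfac : derivative p = Polynomial.C c * ((X - Polynomial.C (z i)) * r) := by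
    rw [mul_prod_erase univ (fun k => X - Polynomial.C (z k)) (mem_univ i)]
    exact eq_C_leadingCoeff_mul_prod_X_sub_C_of_injective hp'
      ((natDegree_derivative_le p).trans (by omega)) hz hcrit
  have hab : ∀ k ∈ univ.erase i, z i ≠ z k := fun k hk => hz.ne (ne_of_mem_erase hk).symm
  have hr : eval (z i) r ≠ 0 := by
    simpa [r, eval_prod, prod_eq_zero_iff, sub_eq_zero] using hab
  have hc : c ≠ 0 := leadingCoeff_ne_zero.2 hp'
  have hderiv : ∀ m : ℕ, eval (z i) (derivative^[m + 2] p)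
      = c * ((m + 1) * eval (z i) (derivative^[m] r)) := fun m => by
    rw [Function.iterate_succ_apply, hfac, iterate_derivative_C_mul, eval_mul, eval_C,
      eval_iterate_derivative_succ_X_sub_C_mul]
  rw [hC, hC, hC, hderiv 1, hderiv 2, hderiv 3, hderiv 0, filter_ne',
    Function.iterate_zero_apply, Function.iterate_one, eval_derivative_prod_X_sub_C_s6 _ hab,
    eval_iterate_derivative_two_prod_X_sub_C_s6 _ hab,
    eval_iterate_derivative_three_prod_X_sub_C _ hab]
  simp only [one_div, ← inv_pow]
  -- keeps `field_simp` from clearing denominators inside the power sums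
  generalize ∑ k ∈ univ.erase i, (z i - z k)⁻¹ = S₁
  generalize ∑ k ∈ univ.erase i, (z i - z k)⁻¹ ^ 2 = S₂
  generalize ∑ k ∈ univ.erase i, (z i - z k)⁻¹ ^ 3 = S₃
  field_simp
  ring

/-- Residue formula R₁(3): for every index `i`,
`∑_{{k≠i}} 1/z_ik³ = (1/8)·(C_i3³ − 2C_i3C_i4 + C_i5)`. -/
theorem stmt_6 (n : ℕ) (hn : 1 ≤ n) (p : Polynomial ℂ)
    (hp : p.Monic) (hdeg : p.natDegree = n + 1)
    (z : Fin n → ℂ) (hz : Function.Injective z)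
    (hcrit : ∀ i, (derivative p).eval (z i) = 0)
    (hnd : ∀ i, (derivative^[2] p).eval (z i) ≠ 0)
    (C : Fin n → ℕ → ℂ)
    (hC : ∀ i k, C i k = ((derivative^[k] p).eval (z i)) / ((derivative^[2] p).eval (z i)))
    (i : Fin n) :
    ∑ k ∈ univ.filter (fun k => k ≠ i), 1 / (z i - z k) ^ 3
      = (1 / 8) * ((C i 3) ^ 3 - 2 * C i 3 * C i 4 + C i 5) :=
  stmt_6_general n p hdeg z hz hcrit C hC i
end

section
/- For every index i ∈ {1,…,n} the following identity holds: ∑_{k≠i} 1/z_{ik}⁶ = (1/60480)·(945C_{i3}⁶ − 3780C_{i3}⁴C_{i4} + 3780C_{i3}²C_{i4}² − 560C_{i4}³ + 1890C_{i3}³C_{i5} − 2520C_{i3}C_{i4}C_{i5} + 315C_{i5}² − 756C_{i3}²C_{i6} + 504C_{i4}C_{i6} + 252C_{i3}C_{i7} − 72C_{i8}). -/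
/-!
The critical points `z_k` are all the roots of `λ' = c ∏ₖ (X - z_k)`, so the Taylor expansion of
`λ'` at `z_i` is `c ∏_{k≠i} z_ik · X ∏_{k≠i} (1 + X / z_ik)`. Reading off coefficients gives
`C_{i,m+2} = (m+1)! e_m`, where `e_m` are the elementary symmetric functions of the `1 / z_ik`;
Newton's identities then express the power sum `∑_{k≠i} z_ik⁻⁶` through `e_1, …, e_6`.
-/

open Polynomial Finset

section Newton

variable (σ R : Type*) [CommRing R] [Fintype σ]

local notation "e" => MvPolynomial.esymm σ R

theorem MvPolynomial.psum_six_eq_esymm :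
    psum σ R 6 = e 1 ^ 6 - 6 * e 1 ^ 4 * e 2 + 9 * e 1 ^ 2 * e 2 ^ 2 - 2 * e 2 ^ 3
      + 6 * e 1 ^ 3 * e 3 - 12 * e 1 * e 2 * e 3 + 3 * e 3 ^ 2
      - 6 * e 1 ^ 2 * e 4 + 6 * e 2 * e 4 + 6 * e 1 * e 5 - 6 * e 6 := by
  have newton (k : ℕ) (hk : 0 < k) := psum_eq_mul_esymm_sub_sum σ R k hk
  have h2 := newton 2 two_pos
  have h3 := newton 3 three_pos
  have h4 := newton 4 four_pos
  have h5 := newton 5 (by norm_num)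
  have h6 := newton 6 (by norm_num)
  simp only [Finset.sum_filter, Finset.Nat.sum_antidiagonal_succ, Finset.Nat.antidiagonal_zero,
    Finset.sum_singleton, Set.mem_Ioo] at h2 h3 h4 h5 h6
  norm_num at h2 h3 h4 h5 h6
  rw [h6, h5, h4, h3, h2, esymm_one]
  ring

end Newton

lemma Polynomial.coeff_prod_C_mul_X_add_one {R ι : Type*} [CommSemiring R] (s : Finset ι)
    (w : ι → R) (m : ℕ) :
    (∏ k ∈ s, (C (w k) * X + 1)).coeff m = (s.val.map w).esymm m := by
  classical
  simp_rw [Finset.esymm_map_val, Finset.prod_add, prod_const_one, mul_one, prod_mul_distrib,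
    prod_const, ← map_prod, finsetSum_coeff, coeff_C_mul_X_pow, powersetCard_eq_filter,
    sum_filter, eq_comm]

lemma Polynomial.iterate_derivative_eval_eq_factorial_mul_coeff_taylor {R : Type*} [CommSemiring R]
    (f : R[X]) (r : R) (k : ℕ) :
    (derivative^[k] f).eval r = k.factorial * (taylor r f).coeff k := by
  rw [taylor_coeff, ← factorial_smul_hasseDeriv, LinearMap.smul_apply, nsmul_eq_mul, eval_mul,
    eval_natCast]

lemma Polynomial.C_leadingCoeff_mul_prod_X_sub_C_of_injective {R ι : Type*} [CommRing R]
    [IsDomain R] [Fintype ι] {q : R[X]} (hq : q ≠ 0) {z : ι → R} (hz : Function.Injective z)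
    (hroot : ∀ i, q.IsRoot (z i)) (hdeg : q.natDegree = Fintype.card ι) :
    C q.leadingCoeff * ∏ i, (X - C (z i)) = q := by
  have hle : univ.val.map z ≤ q.roots :=
    (Multiset.le_iff_subset (univ.nodup.map hz)).2 fun a ha => by
      obtain ⟨i, -, rfl⟩ := Multiset.mem_map.1 ha
      exact (mem_roots hq).2 (hroot i)
  have hroots : univ.val.map z = q.roots :=
    Multiset.eq_of_le_of_card_le hle (by simpa [hdeg] using card_roots' q)
  have hcard : Multiset.card q.roots = q.natDegree := by simp [← hroots, hdeg]
  have := C_leadingCoeff_mul_prod_multiset_X_sub_C hcard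
  rw [← hroots, Multiset.map_map] at this
  exact this

lemma Polynomial.X_add_C_eq_C_mul {K : Type*} [Field K] {d : K} (hd : d ≠ 0) :
    X + C d = C d * (C d⁻¹ * X + 1) := by
  rw [mul_add, ← mul_assoc, ← C_mul, mul_inv_cancel₀ hd, C_1, one_mul, mul_one, add_comm]

lemma Polynomial.taylor_prod_X_sub_C {K ι : Type*} [Field K] [Fintype ι] [DecidableEq ι]
    {z : ι → K} (hz : Function.Injective z) (i : ι) :
    taylor (z i) (∏ k, (X - C (z k)))
      = C (∏ k ∈ univ.erase i, (z i - z k)) * X * ∏ k, (C (z i - z k)⁻¹ * X + 1) := by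
  have hfactor (k : ι) : taylor (z i) (X - C (z k)) = X + C (z i - z k) := by
    rw [map_sub, taylor_X, taylor_C, C_sub]; ring
  have hne (k : ι) (hk : k ∈ univ.erase i) : z i - z k ≠ 0 :=
    sub_ne_zero.2 (hz.ne (mem_erase.1 hk).1.symm)
  rw [show taylor (z i) (∏ k, (X - C (z k))) = ∏ k, taylor (z i) (X - C (z k)) from
    map_prod (taylorAlgHom (z i)) _ _]
  simp_rw [hfactor]
  rw [← mul_prod_erase univ _ (mem_univ i), ← mul_prod_erase univ _ (mem_univ i),
    prod_congr rfl fun k hk => X_add_C_eq_C_mul (hne k hk), prod_mul_distrib, map_prod]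
  simp only [sub_self, C_0, add_zero, inv_zero, zero_mul, zero_add, one_mul]
  ring

lemma Polynomial.eval_iterate_derivative_prod_X_sub_C {K ι : Type*} [Field K] [Fintype ι]
    [DecidableEq ι] {z : ι → K} (hz : Function.Injective z) (i : ι) (m : ℕ) :
    (derivative^[m + 1] (∏ k, (X - C (z k)))).eval (z i)
      = (m + 1).factorial * (∏ k ∈ univ.erase i, (z i - z k))
          * (univ.val.map fun k => (z i - z k)⁻¹).esymm m := by
  rw [iterate_derivative_eval_eq_factorial_mul_coeff_taylor, taylor_prod_X_sub_C hz,
    mul_assoc (C _), coeff_C_mul, coeff_X_mul, coeff_prod_C_mul_X_add_one, mul_assoc]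

theorem stmt_7_general (n : ℕ) (p : Polynomial ℂ)
    (hdeg : p.natDegree = n + 1)
    (z : Fin n → ℂ) (hz : Function.Injective z)
    (hcrit : ∀ i, (derivative p).eval (z i) = 0)
    (hnd : ∀ i, (derivative^[2] p).eval (z i) ≠ 0)
    (C : Fin n → ℕ → ℂ)
    (hC : ∀ i k, C i k = ((derivative^[k] p).eval (z i)) / ((derivative^[2] p).eval (z i)))
    (i : Fin n) :
    ∑ k ∈ univ.filter (fun k => k ≠ i), 1 / (z i - z k) ^ 6
      = (1 / 60480) *
          (945 * (C i 3) ^ 6 - 3780 * (C i 3) ^ 4 * C i 4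
            + 3780 * (C i 3) ^ 2 * (C i 4) ^ 2 - 560 * (C i 4) ^ 3
            + 1890 * (C i 3) ^ 3 * C i 5 - 2520 * C i 3 * C i 4 * C i 5
            + 315 * (C i 5) ^ 2 - 756 * (C i 3) ^ 2 * C i 6
            + 504 * C i 4 * C i 6 + 252 * C i 3 * C i 7 - 72 * C i 8) := by
  classical
  have hfactor := C_leadingCoeff_mul_prod_X_sub_C_of_injective
    (derivative_ne_zero.2 (by omega)) hz hcrit (by simp [hdeg])
  set c := (derivative p).leadingCoeff
  set D := c * ∏ k ∈ univ.erase i, (z i - z k)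
  -- `w i = 0⁻¹ = 0`, so sums and products over all `k` only see the `k ≠ i`.
  set w : Fin n → ℂ := fun k => (z i - z k)⁻¹
  have hderiv (m : ℕ) : (derivative^[m + 2] p).eval (z i)
      = (m + 1).factorial * D * (univ.val.map w).esymm m := by
    rw [Function.iterate_succ_apply, ← hfactor, iterate_derivative_C_mul, eval_mul, eval_C,
      eval_iterate_derivative_prod_X_sub_C hz]
    ring
  have hD : (derivative^[2] p).eval (z i) = D := by
    simpa [Multiset.esymm] using hderiv 0
  have hCe (m : ℕ) : C i (m + 2) = (m + 1).factorial * (univ.val.map w).esymm m := by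
    rw [hC, hderiv, hD]
    field_simp [hD ▸ hnd i]
  have hsum : ∑ k ∈ univ.filter (fun k => k ≠ i), 1 / (z i - z k) ^ 6 = ∑ k, w k ^ 6 := by
    rw [filter_ne', ← sum_erase univ (a := i) (f := fun k => w k ^ 6) (by simp [w])]
    simp [w]
  have newton := congrArg (MvPolynomial.aeval w) (MvPolynomial.psum_six_eq_esymm (Fin n) ℂ)
  simp only [map_sub, map_add, map_mul, map_pow, map_ofNat, MvPolynomial.psum, map_sum,
    MvPolynomial.aeval_X, MvPolynomial.aeval_esymm_eq_multiset_esymm] at newton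
  rw [hsum, newton, hCe 1, hCe 2, hCe 3, hCe 4, hCe 5, hCe 6]
  simp only [Nat.factorial, Nat.cast_mul, Nat.cast_one]
  ring

/-- Residue formula R₁(6): for every index `i`,
`∑_{{k≠i}} 1/z_ik⁶ = (1/60480)·(945C_i3⁶ − 3780C_i3⁴C_i4 + 3780C_i3²C_i4² − 560C_i4³
  + 1890C_i3³C_i5 − 2520C_i3C_i4C_i5 + 315C_i5² − 756C_i3²C_i6 + 504C_i4C_i6
  + 252C_i3C_i7 − 72C_i8)`. -/
theorem stmt_7 (n : ℕ) (hn : 1 ≤ n) (p : Polynomial ℂ)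
    (hp : p.Monic) (hdeg : p.natDegree = n + 1)
    (z : Fin n → ℂ) (hz : Function.Injective z)
    (hcrit : ∀ i, (derivative p).eval (z i) = 0)
    (hnd : ∀ i, (derivative^[2] p).eval (z i) ≠ 0)
    (C : Fin n → ℕ → ℂ)
    (hC : ∀ i k, C i k = ((derivative^[k] p).eval (z i)) / ((derivative^[2] p).eval (z i)))
    (i : Fin n) :
    ∑ k ∈ univ.filter (fun k => k ≠ i), 1 / (z i - z k) ^ 6
      = (1 / 60480) *
          (945 * (C i 3) ^ 6 - 3780 * (C i 3) ^ 4 * C i 4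
            + 3780 * (C i 3) ^ 2 * (C i 4) ^ 2 - 560 * (C i 4) ^ 3
            + 1890 * (C i 3) ^ 3 * C i 5 - 2520 * C i 3 * C i 4 * C i 5
            + 315 * (C i 5) ^ 2 - 756 * (C i 3) ^ 2 * C i 6
            + 504 * C i 4 * C i 6 + 252 * C i 3 * C i 7 - 72 * C i 8) :=
  stmt_7_general n p hdeg z hz hcrit hnd C hC i
end

section
/- For every index i ∈ {1,…,n} the following identity holds: ∑_{k≠i} 1/(λ''(z_k)·z_{ik}²) = −(1/(12·λ''(z_i)))·(3C_{i3}² − 2C_{i4}). -/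
open Polynomial Finset

/-!
Write `q = ∏ⱼ (X - z_j)`, so that `λ' = (n + 1) q`; the constant cancels from both sides, leaving
an identity about `q`. Splitting off the `i`-th term of Lagrange's partition of unity
`∑ₖ q / (q'(z_k) (X - z_k)) = 1` gives `1 = g / g(z_i) + (X - z_i) B` with `g = q / (X - z_i)` and
`B = g · ∑_{k≠i} 1 / (q'(z_k) (X - z_k))`. Differentiating once and twice at `z_i` yields `B(z_i)`
and `B'(z_i)` in terms of `g(z_i), g'(z_i), g''(z_i)`, and `B'(z_i)` contains the sum
`∑_{k≠i} 1 / (q'(z_k) z_{ik}²)`. Finally `q^{(m+1)}(z_i) = (m + 1) g^{(m)}(z_i)`.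
-/

namespace Polynomial

section CommRing

variable {R : Type*} [CommRing R]

theorem iterate_derivative_succ_X_sub_C_mul_s8 (a : R) (f : R[X]) (k : ℕ) :
    derivative^[k + 1] ((X - C a) * f)
      = (X - C a) * derivative^[k + 1] f + ((k : R[X]) + 1) * derivative^[k] f := by
  induction k with
  | zero => simp [derivative_mul, add_comm]
  | succ k ih =>
    rw [Function.iterate_succ_apply', ih, Function.iterate_succ_apply' _ (k + 1)]
    simp only [derivative_add, derivative_mul, derivative_sub, derivative_X, derivative_C,
      derivative_natCast, derivative_one, Function.iterate_succ_apply']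
    push_cast
    ring

theorem eval_iterate_derivative_succ_X_sub_C_mul_s8 (a : R) (f : R[X]) (k : ℕ) :
    eval a (derivative^[k + 1] ((X - C a) * f)) = (k + 1) * eval a (derivative^[k] f) := by
  simp [iterate_derivative_succ_X_sub_C_mul_s8]

end CommRing

section Field

variable {F : Type*} [Field F] {g h : F[X]} {a x : F}

theorem eval_eq_div_of_eq_X_sub_C_mul (hgh : g = (X - C a) * h) (hx : x - a ≠ 0) :
    eval x h = eval x g / (x - a) := by
  rw [hgh, eval_mul, eval_sub, eval_X, eval_C]
  field_simp

theorem eval_derivative_eq_of_eq_X_sub_C_mul (hgh : g = (X - C a) * h) (hx : x - a ≠ 0) :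
    eval x (derivative h) = eval x (derivative g) / (x - a) - eval x g / (x - a) ^ 2 := by
  have hg' : eval x (derivative g) = eval x h + (x - a) * eval x (derivative h) := by
    simp [hgh, derivative_mul]
  rw [hg', eval_eq_div_of_eq_X_sub_C_mul hgh hx]
  field_simp
  ring

end Field

end Polynomial

namespace Lagrange

variable {F : Type*} [Field F] {ι : Type*} {v : ι → F}

theorem derivative_eq_C_mul_nodal_univ [CharZero F] [Fintype ι] {p : F[X]} (hp : p.Monic)
    (hdeg : p.natDegree = Fintype.card ι + 1) (hv : Function.Injective v)
    (hcrit : ∀ k, (derivative p).eval (v k) = 0) :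
    derivative p = C ((Fintype.card ι : F) + 1) * nodal univ v := by
  have hc : (Fintype.card ι : F) + 1 ≠ 0 := Nat.cast_add_one_ne_zero _
  have hp' : derivative p ≠ 0 := derivative_ne_zero.mpr (by omega)
  have hdeg' : (derivative p).degree = Fintype.card ι := by
    rw [degree_eq_natDegree hp', natDegree_derivative, hdeg, Nat.add_sub_cancel]
  refine eq_of_degree_le_of_eval_index_eq univ hv.injOn (by rw [hdeg', card_univ]) ?_ ?_ ?_
  · rw [hdeg', degree_C_mul hc, degree_nodal, card_univ]
  · rw [leadingCoeff_derivative, hp.leadingCoeff, hdeg, leadingCoeff_C_mul_of_isUnit hc.isUnit,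
      nodal_monic.leadingCoeff]
    push_cast
    ring
  · intro k hk
    rw [hcrit, eval_mul, eval_nodal_at_node hk, mul_zero]

variable [DecidableEq ι] {s : Finset ι} {i : ι}

theorem basis_eq_C_nodalWeight_mul_nodal_erase (hi : i ∈ s) :
    Lagrange.basis s v i = C (nodalWeight s v i) * nodal (s.erase i) v := by
  rw [basis_eq_prod_sub_inv_mul_nodal_div hi, nodal_erase_eq_nodal_div hi]

theorem C_nodalWeight_mul_nodal_erase_add_X_sub_C_mul (hvs : Set.InjOn v s) (hi : i ∈ s) :
    C (nodalWeight s v i) * nodal (s.erase i) v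
      + (X - C (v i)) * ∑ k ∈ s.erase i, C (nodalWeight s v k) * nodal ((s.erase i).erase k) v
      = 1 := by
  rw [← sum_basis hvs ⟨i, hi⟩, ← add_sum_erase _ _ hi, basis_eq_C_nodalWeight_mul_nodal_erase hi,
    mul_sum]
  congr 1
  refine sum_congr rfl fun k hk => ?_
  have hik : i ∈ s.erase k := mem_erase.mpr ⟨(ne_of_mem_erase hk).symm, hi⟩
  rw [basis_eq_C_nodalWeight_mul_nodal_erase (mem_of_mem_erase hk),
    nodal_eq_mul_nodal_erase hik, erase_right_comm]
  ring

theorem nodalWeight_mul_eval_iterate_derivative_nodal_erase_add_eq_zero (hvs : Set.InjOn v s)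
    (hi : i ∈ s) (m : ℕ) :
    nodalWeight s v i * eval (v i) (derivative^[m + 1] (nodal (s.erase i) v))
      + (m + 1) * eval (v i) (derivative^[m]
          (∑ k ∈ s.erase i, C (nodalWeight s v k) * nodal ((s.erase i).erase k) v)) = 0 := by
  have h := congrArg (fun f => eval (v i) (derivative^[m + 1] f))
    (C_nodalWeight_mul_nodal_erase_add_X_sub_C_mul hvs hi)
  simpa only [iterate_map_add, iterate_derivative_C_mul, eval_add, eval_mul, eval_C,
    eval_iterate_derivative_succ_X_sub_C_mul_s8, iterate_derivative_one m.succ_pos, eval_zero] using h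

theorem sub_ne_zero_of_mem_erase (hvs : Set.InjOn v s) (hi : i ∈ s) {k : ι} (hk : k ∈ s.erase i) :
    v i - v k ≠ 0 :=
  sub_ne_zero.mpr fun h => ne_of_mem_erase hk (hvs hi (mem_of_mem_erase hk) h).symm

theorem eval_sum_C_nodalWeight_mul_nodal_erase_erase (hvs : Set.InjOn v s) (hi : i ∈ s) :
    eval (v i) (∑ k ∈ s.erase i, C (nodalWeight s v k) * nodal ((s.erase i).erase k) v)
      = eval (v i) (nodal (s.erase i) v) * ∑ k ∈ s.erase i, nodalWeight s v k / (v i - v k) := by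
  rw [eval_finsetSum, mul_sum]
  refine sum_congr rfl fun k hk => ?_
  rw [eval_mul, eval_C, eval_eq_div_of_eq_X_sub_C_mul (nodal_eq_mul_nodal_erase hk)
    (sub_ne_zero_of_mem_erase hvs hi hk)]
  ring

theorem eval_derivative_sum_C_nodalWeight_mul_nodal_erase_erase (hvs : Set.InjOn v s)
    (hi : i ∈ s) :
    eval (v i) (derivative
        (∑ k ∈ s.erase i, C (nodalWeight s v k) * nodal ((s.erase i).erase k) v))
      = eval (v i) (derivative (nodal (s.erase i) v))
          * ∑ k ∈ s.erase i, nodalWeight s v k / (v i - v k)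
        - eval (v i) (nodal (s.erase i) v)
          * ∑ k ∈ s.erase i, nodalWeight s v k / (v i - v k) ^ 2 := by
  rw [derivative_sum, eval_finsetSum, mul_sum, mul_sum, ← sum_sub_distrib]
  refine sum_congr rfl fun k hk => ?_
  rw [derivative_C_mul, eval_mul, eval_C, eval_derivative_eq_of_eq_X_sub_C_mul
    (nodal_eq_mul_nodal_erase hk) (sub_ne_zero_of_mem_erase hvs hi hk)]
  ring

theorem sum_nodalWeight_div_sub_sq [CharZero F] (hvs : Set.InjOn v s) (hi : i ∈ s) :
    ∑ k ∈ s.erase i, nodalWeight s v k / (v i - v k) ^ 2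
      = eval (v i) (derivative^[3] (nodal s v)) / (6 * eval (v i) (derivative (nodal s v)) ^ 2)
        - eval (v i) (derivative^[2] (nodal s v)) ^ 2
          / (4 * eval (v i) (derivative (nodal s v)) ^ 3) := by
  have hQ : ∀ m, eval (v i) (derivative^[m + 1] (nodal s v))
      = (m + 1) * eval (v i) (derivative^[m] (nodal (s.erase i) v)) :=
    fun m => by rw [nodal_eq_mul_nodal_erase hi, eval_iterate_derivative_succ_X_sub_C_mul_s8]
  have hB := nodalWeight_mul_eval_iterate_derivative_nodal_erase_add_eq_zero hvs hi
  have hB0 := eval_sum_C_nodalWeight_mul_nodal_erase_erase hvs hi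
  have hB1 := eval_derivative_sum_C_nodalWeight_mul_nodal_erase_erase hvs hi
  set G0 := eval (v i) (nodal (s.erase i) v)
  set G1 := eval (v i) (derivative (nodal (s.erase i) v))
  set G2 := eval (v i) (derivative^[2] (nodal (s.erase i) v))
  set T := ∑ k ∈ s.erase i, nodalWeight s v k / (v i - v k)
  set S := ∑ k ∈ s.erase i, nodalWeight s v k / (v i - v k) ^ 2
  have hw : nodalWeight s v i = G0⁻¹ := nodalWeight_eq_eval_nodal_erase_inv
  have hG0 : G0 ≠ 0 := fun h => nodalWeight_ne_zero hvs hi (by rw [hw, h, inv_zero])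
  have e0 : G0⁻¹ * G1 + G0 * T = 0 := by simpa [hw, hB0] using hB 0
  have e1 : G0⁻¹ * G2 + 2 * (G1 * T - G0 * S) = 0 := by
    have h := hB 1
    rw [hw, Function.iterate_one, hB1] at h
    norm_num at h
    exact h
  have key : 2 * G0 ^ 3 * S = G0 * G2 - 2 * G1 ^ 2 := by
    field_simp at e0 e1
    linear_combination -G0 * e1 + 2 * G1 * e0
  have q1 : eval (v i) (derivative (nodal s v)) = G0 := (hQ 0).trans (by norm_num [G0])
  have q2 : eval (v i) (derivative^[2] (nodal s v)) = 2 * G1 := (hQ 1).trans (by norm_num [G1])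
  have q3 : eval (v i) (derivative^[3] (nodal s v)) = 3 * G2 := (hQ 2).trans (by norm_num [G2])
  rw [q1, q2, q3]
  field_simp
  linear_combination 12 * key

end Lagrange

open Lagrange in
theorem stmt_8_general (n : ℕ) (p : Polynomial ℂ)
    (hp : p.Monic) (hdeg : p.natDegree = n + 1)
    (z : Fin n → ℂ) (hz : Function.Injective z)
    (hcrit : ∀ i, (derivative p).eval (z i) = 0)
    (C : Fin n → ℕ → ℂ)
    (hC : ∀ i k, C i k = ((derivative^[k] p).eval (z i)) / ((derivative^[2] p).eval (z i)))
    (i : Fin n) :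
    ∑ k ∈ univ.filter (fun k => k ≠ i), 1 / ((derivative^[2] p).eval (z k) * (z i - z k) ^ 2)
      = -(1 / (12 * (derivative^[2] p).eval (z i))) * (3 * (C i 3) ^ 2 - 2 * C i 4) := by
  set c : ℂ := (n : ℂ) + 1
  have hc : c ≠ 0 := Nat.cast_add_one_ne_zero n
  have hfact : derivative p = Polynomial.C c * nodal univ z := by
    simpa only [Fintype.card_fin] using
      derivative_eq_C_mul_nodal_univ hp (by rwa [Fintype.card_fin]) hz hcrit
  have hiter : ∀ m, derivative^[m + 1] p = Polynomial.C c * derivative^[m] (nodal univ z) := by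
    intro m
    rw [Function.iterate_succ_apply, hfact, iterate_derivative_C_mul]
  have hw : ∀ k, eval (z k) (derivative (nodal univ z)) = (nodalWeight univ z k)⁻¹ := fun k => by
    rw [nodalWeight_eq_eval_derivative_nodal (mem_univ k), inv_inv]
  have hLHS : ∑ k ∈ univ.erase i, 1 / (c * eval (z k) (derivative (nodal univ z)) * (z i - z k) ^ 2)
      = c⁻¹ * ∑ k ∈ univ.erase i, nodalWeight univ z k / (z i - z k) ^ 2 := by
    rw [mul_sum]
    exact sum_congr rfl fun k _ => by
      rw [hw, one_div, mul_inv, mul_inv, inv_inv, div_eq_mul_inv]; ring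
  rw [hC, hC, hiter 1, hiter 2, hiter 3, filter_ne']
  simp only [Function.iterate_one, eval_mul, eval_C]
  rw [hLHS, sum_nodalWeight_div_sub_sq hz.injOn (mem_univ i)]
  field_simp
  ring

/-- Residue formula R₂(2): for every index `i`,
`∑_{{k≠i}} 1/(λ''(z_k)·z_ik²) = −(1/(12·λ''(z_i)))·(3C_i3² − 2C_i4)`. -/
theorem stmt_8 (n : ℕ) (hn : 1 ≤ n) (p : Polynomial ℂ)
    (hp : p.Monic) (hdeg : p.natDegree = n + 1)
    (z : Fin n → ℂ) (hz : Function.Injective z)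
    (hcrit : ∀ i, (derivative p).eval (z i) = 0)
    (hnd : ∀ i, (derivative^[2] p).eval (z i) ≠ 0)
    (C : Fin n → ℕ → ℂ)
    (hC : ∀ i k, C i k = ((derivative^[k] p).eval (z i)) / ((derivative^[2] p).eval (z i)))
    (i : Fin n) :
    ∑ k ∈ univ.filter (fun k => k ≠ i), 1 / ((derivative^[2] p).eval (z k) * (z i - z k) ^ 2)
      = -(1 / (12 * (derivative^[2] p).eval (z i))) * (3 * (C i 3) ^ 2 - 2 * C i 4) :=
  stmt_8_general n p hp hdeg z hz hcrit C hC i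
end

section
/- For every index i ∈ {1,…,n} the following identity holds: ∑_{k≠i} 1/(λ''(z_k)·z_{ik}⁶) = −(1/(60480·λ''(z_i)))·(945C_{i3}⁶ − 3150C_{i3}⁴C_{i4} + 2520C_{i3}²C_{i4}² − 280C_{i4}³ + 1260C_{i3}³C_{i5} − 1260C_{i3}C_{i4}C_{i5} + 105C_{i5}² − 378C_{i3}²C_{i6} + 168C_{i4}C_{i6} + 84C_{i3}C_{i7} − 12C_{i8}). -/
/-!
Since `λ' = (n + 1) ∏ₖ (X - z_k)`, we have `λ''(z_k) = (n + 1) ∏_{j ≠ k} (z_k - z_j)`, so up to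
the factor `(n + 1)⁻¹` the left-hand side is the sum of the residues at `z_k`, `k ≠ i`, of
`1 / ((z - z_i)⁶ ∏ⱼ (z - z_j))`. The residues of this rational function add up to zero, so that
sum is minus the residue at `z_i`: the coefficient of `t⁶` in `1 / Q(t)`, where
`Q(t) = ∏_{j ≠ i} (z_i + t - z_j)`. Since `λ^{(k+2)}(z_i) = (n + 1) (k + 1)! [tᵏ] Q`, inverting `Q`
to order six gives the formula.

The residue theorem is replaced by Lagrange interpolation: if `V` is the truncation of `1 / Q`
below degree `6`, then `(1 - Q V) / t⁶`, written in the variable `z = z_i + t`, is a polynomial `f`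
of degree at most `n - 2`, so `∑ₖ f(z_k) / ∏_{j ≠ k} (z_k - z_j) = 0`.
-/

open Polynomial Finset

namespace PowerSeries

theorem sum_range_coeff_mul_coeff_inv {K : Type*} [Field K] {f : K⟦X⟧} (h0 : constantCoeff f ≠ 0)
    (j : ℕ) : ∑ l ∈ range (j + 1), coeff l f * coeff (j - l) f⁻¹ = if j = 0 then 1 else 0 := by
  rw [← Nat.sum_antidiagonal_eq_sum_range_succ (fun a b => coeff a f * coeff b f⁻¹), ← coeff_mul,
    PowerSeries.mul_inv_cancel _ h0, coeff_one]

theorem coeff_six_inv {K : Type*} [Field K] [CharZero K] {f : K⟦X⟧} (h0 : constantCoeff f ≠ 0)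
    {c : ℕ → K} (hc : ∀ j, c (j + 2) * constantCoeff f = (j + 1).factorial * coeff j f) :
    coeff 6 f⁻¹ = 1 / (60480 * constantCoeff f) *
      (945 * c 3 ^ 6 - 3150 * c 3 ^ 4 * c 4 + 2520 * c 3 ^ 2 * c 4 ^ 2 - 280 * c 4 ^ 3
        + 1260 * c 3 ^ 3 * c 5 - 1260 * c 3 * c 4 * c 5 + 105 * c 5 ^ 2 - 378 * c 3 ^ 2 * c 6
        + 168 * c 4 * c 6 + 84 * c 3 * c 7 - 12 * c 8) := by
  set a := constantCoeff f
  have hcoeff : ∀ j, coeff j f = c (j + 2) * a / (j + 1).factorial := fun j => by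
    rw [hc, mul_div_cancel_left₀ _ (Nat.cast_ne_zero.mpr (Nat.factorial_ne_zero _))]
  have hc2 : c 2 = 1 := mul_left_cancel₀ h0 (by simpa [mul_comm] using hc 0)
  have r0 := sum_range_coeff_mul_coeff_inv h0 0
  have r1 := sum_range_coeff_mul_coeff_inv h0 1
  have r2 := sum_range_coeff_mul_coeff_inv h0 2
  have r3 := sum_range_coeff_mul_coeff_inv h0 3
  have r4 := sum_range_coeff_mul_coeff_inv h0 4
  have r5 := sum_range_coeff_mul_coeff_inv h0 5
  have r6 := sum_range_coeff_mul_coeff_inv h0 6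
  simp only [sum_range_succ, sum_range_zero, hcoeff] at r0 r1 r2 r3 r4 r5 r6
  norm_num [Nat.factorial, hc2, constantCoeff_inv] at r0 r1 r2 r3 r4 r5 r6
  -- `w` is the coefficient sequence of `(f / a)⁻¹`.
  set w : ℕ → K := fun j => a * coeff j f⁻¹ with hw
  have w1 : w 1 = -(c 3 / 2) := by linear_combination r1 - c 3 / 2 * r0
  have w2 : w 2 = -(c 3 / 2 * w 1 + c 4 / 6) := by linear_combination r2 - c 4 / 6 * r0
  have w3 : w 3 = -(c 3 / 2 * w 2 + c 4 / 6 * w 1 + c 5 / 24) := by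
    linear_combination r3 - c 5 / 24 * r0
  have w4 : w 4 = -(c 3 / 2 * w 3 + c 4 / 6 * w 2 + c 5 / 24 * w 1 + c 6 / 120) := by
    linear_combination r4 - c 6 / 120 * r0
  have w5 : w 5 = -(c 3 / 2 * w 4 + c 4 / 6 * w 3 + c 5 / 24 * w 2 + c 6 / 120 * w 1
      + c 7 / 720) := by
    linear_combination r5 - c 7 / 720 * r0
  have w6 : w 6 = -(c 3 / 2 * w 5 + c 4 / 6 * w 4 + c 5 / 24 * w 3 + c 6 / 120 * w 2
      + c 7 / 720 * w 1 + c 8 / 5040) := by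
    linear_combination r6 - c 8 / 5040 * r0
  rw [w1] at w2
  rw [w1, w2] at w3
  rw [w1, w2, w3] at w4
  rw [w1, w2, w3, w4] at w5
  rw [w1, w2, w3, w4, w5, hw] at w6
  field_simp
  linear_combination 60480 * w6

end PowerSeries

namespace Polynomial

theorem coeff_one_sub_mul_trunc_inv {F : Type*} [Field F] {Q : F[X]} (hQ : Q.coeff 0 ≠ 0)
    {d m : ℕ} (hdm : d ≤ m) :
    (1 - Q * PowerSeries.trunc m (Q : PowerSeries F)⁻¹).coeff d
      = if d = m then Q.coeff 0 * PowerSeries.coeff m (Q : PowerSeries F)⁻¹ else 0 := by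
  have hinv : PowerSeries.coeff d
      ((Q : PowerSeries F) * (PowerSeries.trunc (m + 1) (Q : PowerSeries F)⁻¹ : PowerSeries F))
        = PowerSeries.coeff d ((1 : F[X]) : PowerSeries F) := by
    rw [← PowerSeries.coeff_coe_trunc_of_lt (Nat.lt_succ_of_le hdm), PowerSeries.trunc_mul_trunc,
      PowerSeries.mul_inv_cancel _ (by simpa using hQ), Polynomial.coe_one,
      PowerSeries.coeff_coe_trunc_of_lt (Nat.lt_succ_of_le hdm)]
  rw [PowerSeries.trunc_succ, Polynomial.coe_add, mul_add, map_add, ← Polynomial.coe_mul,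
    ← Polynomial.coe_mul, Polynomial.coeff_coe, Polynomial.coeff_coe, Polynomial.coeff_coe,
    ← C_mul_X_pow_eq_monomial, mul_left_comm, coeff_C_mul, coeff_mul_X_pow'] at hinv
  rw [coeff_sub]
  rcases hdm.lt_or_eq with hlt | rfl
  · rw [if_neg (not_le.mpr hlt), mul_zero, add_zero] at hinv
    rw [if_neg hlt.ne, hinv, sub_self]
  · rw [if_pos le_rfl, Nat.sub_self] at hinv
    rw [if_pos rfl]
    linear_combination -hinv

theorem eval_iterate_derivative_X_sub_C_mul {R : Type*} [CommRing R] (r : R) (g : R[X]) (j : ℕ) :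
    (derivative^[j + 1] ((X - C r) * g)).eval r = (j + 1).factorial * (taylor r g).coeff j := by
  rw [← factorial_smul_hasseDeriv, LinearMap.smul_apply, eval_smul, nsmul_eq_mul, ← taylor_coeff,
    taylor_mul, show taylor r (X - C r) = X by simp [taylor_apply], coeff_X_mul]

theorem derivative_eq_C_mul_nodal {F ι : Type*} [Field F] [Fintype ι] {p : F[X]} (hp : p.Monic)
    (hdeg : p.natDegree = Fintype.card ι + 1) {z : ι → F} (hz : Function.Injective z)
    (hcrit : ∀ k, (derivative p).eval (z k) = 0) :
    derivative p = C ((Fintype.card ι : F) + 1) * Lagrange.nodal univ z := by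
  have hdvd : Lagrange.nodal univ z ∣ derivative p := by
    rw [Lagrange.nodal_eq]
    exact prod_dvd_of_coprime (fun k _ l _ hkl => pairwise_coprime_X_sub_C hz hkl)
      fun k _ => dvd_iff_isRoot.mpr (hcrit k)
  have hle : (derivative p).natDegree ≤ (Lagrange.nodal univ z).natDegree := by
    rw [Lagrange.natDegree_nodal, card_univ]
    exact (natDegree_derivative_le p).trans (by omega)
  have hP := eq_leadingCoeff_mul_of_monic_of_dvd_of_natDegree_le Lagrange.nodal_monic hdvd hle
  have htop : (Lagrange.nodal univ z).coeff (Fintype.card ι) = 1 := by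
    simpa [Lagrange.natDegree_nodal] using
      (Lagrange.nodal_monic (s := univ) (v := z)).coeff_natDegree
  have hlead := congrArg (coeff · (Fintype.card ι)) hP
  simp only [coeff_C_mul, htop, mul_one, coeff_derivative, ← hdeg, hp.coeff_natDegree,
    one_mul] at hlead
  rw [hP, ← hlead]

end Polynomial

namespace Lagrange

variable {F ι : Type*} [Field F] [Fintype ι] [DecidableEq ι] {z : ι → F}

theorem coeff_zero_taylor_nodal_erase_ne_zero (hz : Function.Injective z) (i : ι) :
    (taylor (z i) (nodal (univ.erase i) z)).coeff 0 ≠ 0 := by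
  rw [taylor_coeff_zero, eval_nodal]
  exact prod_ne_zero_iff.mpr fun j hj => sub_ne_zero.mpr (hz.ne (ne_of_mem_erase hj).symm)

theorem sum_eval_mul_nodalWeight_eq_zero (hz : Function.Injective z) {f : F[X]}
    (hf : f.degree < ↑(Fintype.card ι - 1)) :
    ∑ k, f.eval (z k) * nodalWeight univ z k = 0 := by
  have h := coeff_eq_sum (s := univ) hz.injOn (hf.trans_le (by simp))
  rw [coeff_eq_zero_of_degree_lt (by simpa using hf)] at h
  simpa [nodalWeight, div_eq_mul_inv, prod_inv_distrib] using h.symm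

theorem exists_degree_lt_eval_eq_inv_sub_pow (hz : Function.Injective z) (i : ι) {m : ℕ}
    (hm : 0 < m) :
    ∃ f : F[X], f.degree < ↑(Fintype.card ι - 1) ∧
      (∀ k ≠ i, f.eval (z k) = ((z k - z i) ^ m)⁻¹) ∧
      f.eval (z i) * nodalWeight univ z i
        = PowerSeries.coeff m ((taylor (z i) (nodal (univ.erase i) z) : PowerSeries F)⁻¹) := by
  set q := nodal (univ.erase i) z
  set Q := taylor (z i) q
  have hQ0 : Q.coeff 0 ≠ 0 := coeff_zero_taylor_nodal_erase_ne_zero hz i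
  set V := PowerSeries.trunc m (Q : PowerSeries F)⁻¹
  obtain ⟨g, hg⟩ : X ^ m ∣ 1 - Q * V := X_pow_dvd_iff.mpr fun d hd => by
    rw [coeff_one_sub_mul_trunc_inv hQ0 hd.le, if_neg hd.ne]
  have hVdeg : V.natDegree < m := by
    obtain ⟨m, rfl⟩ := Nat.exists_eq_succ_of_ne_zero hm.ne'
    exact PowerSeries.natDegree_trunc_lt _ _
  have hQVdeg : (Q * V).natDegree < m + (Fintype.card ι - 1) := by
    refine natDegree_mul_le.trans_lt ?_
    rw [natDegree_taylor, natDegree_nodal, card_erase_of_mem (mem_univ i), card_univ]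
    omega
  have hdeg : (1 - Q * V).natDegree < m + (Fintype.card ι - 1) :=
    (natDegree_sub_le _ _).trans_lt (max_lt (by rw [natDegree_one]; omega) hQVdeg)
  refine ⟨taylor (-z i) g, ?_, fun k hk => ?_, ?_⟩
  · rw [degree_taylor, degree_lt_iff_coeff_zero]
    intro j hj
    rw [← coeff_X_pow_mul, ← hg]
    exact coeff_eq_zero_of_natDegree_lt (by omega)
  · have h := congrArg (eval (z k - z i)) hg
    simp only [eval_sub, eval_one, eval_mul, eval_pow, eval_X, Q, q, taylor_eval, sub_add_cancel,
      eval_nodal_at_node (mem_erase.mpr ⟨hk, mem_univ k⟩), zero_mul, sub_zero] at h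
    rw [taylor_eval, ← sub_eq_add_neg]
    exact eq_inv_of_mul_eq_one_right h.symm
  · have h := coeff_one_sub_mul_trunc_inv hQ0 (le_refl m)
    rw [if_pos rfl, hg, coeff_X_pow_mul', if_pos le_rfl, Nat.sub_self] at h
    rw [taylor_eval, add_neg_cancel, ← coeff_zero_eq_eval_zero, h,
      nodalWeight_eq_eval_nodal_erase_inv, ← taylor_coeff_zero, mul_comm, inv_mul_cancel_left₀ hQ0]

theorem sum_erase_nodalWeight_div_sub_pow (hz : Function.Injective z) (i : ι) {m : ℕ}
    (hm : 0 < m) :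
    ∑ k ∈ univ.erase i, nodalWeight univ z k / (z k - z i) ^ m
      = -PowerSeries.coeff m ((taylor (z i) (nodal (univ.erase i) z) : PowerSeries F)⁻¹) := by
  obtain ⟨f, hfdeg, hfk, hfi⟩ := exists_degree_lt_eval_eq_inv_sub_pow hz i hm
  have hsum := sum_eval_mul_nodalWeight_eq_zero hz hfdeg
  rw [← add_sum_erase _ _ (mem_univ i), hfi] at hsum
  rw [eq_neg_iff_add_eq_zero, ← hsum, add_comm]
  refine congrArg _ (sum_congr rfl fun k hk => ?_)
  rw [hfk k (ne_of_mem_erase hk), inv_mul_eq_div]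

end Lagrange

theorem stmt_9_general (n : ℕ) (p : Polynomial ℂ)
    (hp : p.Monic) (hdeg : p.natDegree = n + 1)
    (z : Fin n → ℂ) (hz : Function.Injective z)
    (hcrit : ∀ i, (derivative p).eval (z i) = 0)
    (C : Fin n → ℕ → ℂ)
    (hC : ∀ i k, C i k = ((derivative^[k] p).eval (z i)) / ((derivative^[2] p).eval (z i)))
    (i : Fin n) :
    ∑ k ∈ univ.filter (fun k => k ≠ i), 1 / ((derivative^[2] p).eval (z k) * (z i - z k) ^ 6)
      = -(1 / (60480 * (derivative^[2] p).eval (z i))) *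
          (945 * (C i 3) ^ 6 - 3150 * (C i 3) ^ 4 * C i 4
            + 2520 * (C i 3) ^ 2 * (C i 4) ^ 2 - 280 * (C i 4) ^ 3
            + 1260 * (C i 3) ^ 3 * C i 5 - 1260 * C i 3 * C i 4 * C i 5
            + 105 * (C i 5) ^ 2 - 378 * (C i 3) ^ 2 * C i 6
            + 168 * C i 4 * C i 6 + 84 * C i 3 * C i 7 - 12 * C i 8) := by
  have hP : derivative p = Polynomial.C ((n : ℂ) + 1) * Lagrange.nodal univ z := by
    simpa using derivative_eq_C_mul_nodal hp (by simpa using hdeg) hz hcrit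
  set Q := taylor (z i) (Lagrange.nodal (univ.erase i) z)
  have hQ0 : Q.coeff 0 ≠ 0 := Lagrange.coeff_zero_taylor_nodal_erase_ne_zero hz i
  have hder : ∀ j,
      (derivative^[j + 2] p).eval (z i) = (n + 1) * (j + 1).factorial * Q.coeff j := fun j => by
    rw [Function.iterate_succ_apply, hP, iterate_derivative_C_mul, eval_mul, eval_C,
      Lagrange.nodal_eq_mul_nodal_erase (mem_univ i), eval_iterate_derivative_X_sub_C_mul,
      mul_assoc]
  have hsecond : (derivative^[2] p).eval (z i) = (n + 1) * Q.coeff 0 := by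
    simpa using hder 0
  have hc : ∀ j, C i (j + 2) * PowerSeries.constantCoeff (Q : PowerSeries ℂ)
      = (j + 1).factorial * PowerSeries.coeff j (Q : PowerSeries ℂ) := by
    intro j
    rw [Polynomial.constantCoeff_coe, Polynomial.coeff_coe, hC, hder, hsecond]
    field_simp
  have hterm : ∀ k, 1 / ((derivative^[2] p).eval (z k) * (z i - z k) ^ 6)
      = ((n : ℂ) + 1)⁻¹ * (Lagrange.nodalWeight univ z k / (z k - z i) ^ 6) := by
    intro k
    rw [Function.iterate_succ_apply, Function.iterate_one, hP, derivative_C_mul, eval_mul, eval_C,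
      Lagrange.nodalWeight_eq_eval_derivative_nodal (mem_univ k), ← neg_sub (z k),
      Even.neg_pow (by decide), one_div, mul_inv, mul_inv, div_eq_mul_inv, mul_assoc]
  rw [filter_ne', sum_congr rfl fun k _ => hterm k, ← mul_sum,
    Lagrange.sum_erase_nodalWeight_div_sub_pow hz i (by norm_num),
    PowerSeries.coeff_six_inv (by simpa using hQ0) hc, Polynomial.constantCoeff_coe, hsecond]
  field_simp

/-- Residue formula R₂(6): for every index `i`,
`∑_{{k≠i}} 1/(λ''(z_k)·z_ik⁶) = −(1/(60480·λ''(z_i)))·(945C_i3⁶ − 3150C_i3⁴C_i4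
  + 2520C_i3²C_i4² − 280C_i4³ + 1260C_i3³C_i5 − 1260C_i3C_i4C_i5 + 105C_i5²
  − 378C_i3²C_i6 + 168C_i4C_i6 + 84C_i3C_i7 − 12C_i8)`. -/
theorem stmt_9 (n : ℕ) (hn : 1 ≤ n) (p : Polynomial ℂ)
    (hp : p.Monic) (hdeg : p.natDegree = n + 1)
    (z : Fin n → ℂ) (hz : Function.Injective z)
    (hcrit : ∀ i, (derivative p).eval (z i) = 0)
    (hnd : ∀ i, (derivative^[2] p).eval (z i) ≠ 0)
    (C : Fin n → ℕ → ℂ)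
    (hC : ∀ i k, C i k = ((derivative^[k] p).eval (z i)) / ((derivative^[2] p).eval (z i)))
    (i : Fin n) :
    ∑ k ∈ univ.filter (fun k => k ≠ i), 1 / ((derivative^[2] p).eval (z k) * (z i - z k) ^ 6)
      = -(1 / (60480 * (derivative^[2] p).eval (z i))) *
          (945 * (C i 3) ^ 6 - 3150 * (C i 3) ^ 4 * C i 4
            + 2520 * (C i 3) ^ 2 * (C i 4) ^ 2 - 280 * (C i 4) ^ 3
            + 1260 * (C i 3) ^ 3 * C i 5 - 1260 * C i 3 * C i 4 * C i 5
            + 105 * (C i 5) ^ 2 - 378 * (C i 3) ^ 2 * C i 6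
            + 168 * C i 4 * C i 6 + 84 * C i 3 * C i 7 - 12 * C i 8) :=
  stmt_9_general n p hp hdeg z hz hcrit C hC i
end

section
/- For every index k ∈ {1,…,n} and every integer p ≥ 1 the following identity holds: λ^{(p+2)}(z_k)/λ''(z_k) = (p+1)! · ∑_{j_1 < … < j_p, all j_m ≠ k} 1/((z_k − z_{j_1})⋯(z_k − z_{j_p})), where the sum ranges over all p-element subsets {j_1,…,j_p} of {1,…,n}∖{k} (and equals 0 if there are none). -/
/-!
Since `λ'` has leading coefficient `n + 1` and the `n` distinct roots `zᵢ`, it equals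
`(n + 1) ∏ᵢ (X - zᵢ)`. Expanding at `z_k` gives
`λ'(z_k + t) = (n + 1) t ∏_{j ≠ k} (t + z_{kj})`
`            = (n + 1) (∏_{j ≠ k} z_{kj}) t ∏_{j ≠ k} (1 + t / z_{kj})`,
so the Taylor coefficient `λ^{(m+2)}(z_k) / (m + 1)!` is `(n + 1) ∏_{j ≠ k} z_{kj}` times the
`m`-th elementary symmetric function of the `1 / z_{kj}`. The case `m = 0` is `λ''(z_k)`, and
the identity is the quotient of the two.
-/

open Polynomial Finset

open scoped Nat

namespace Polynomial

variable {R : Type*}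

theorem eq_C_leadingCoeff_mul_prod_X_sub_C_of_injective_s17 [CommRing R] [IsDomain R]
    {ι : Type*} [Fintype ι] {q : R[X]} (hdeg : q.natDegree = Fintype.card ι) {z : ι → R}
    (hz : Function.Injective z) (hroot : ∀ i, q.IsRoot (z i)) :
    q = C q.leadingCoeff * ∏ i, (X - C (z i)) := by
  rcases eq_or_ne q 0 with rfl | hq
  · simp
  have hle : univ.val.map z ≤ q.roots :=
    (Multiset.le_iff_subset (univ.nodup.map hz)).mpr fun x hx => by
      obtain ⟨i, -, rfl⟩ := Multiset.mem_map.mp hx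
      exact (mem_roots hq).mpr (hroot i)
  have hroots : q.roots = univ.val.map z :=
    (Multiset.eq_of_le_of_card_le hle (by simpa [hdeg] using card_roots' q)).symm
  have := C_leadingCoeff_mul_prod_multiset_X_sub_C (p := q) (by simp [hroots, hdeg])
  rw [hroots, Multiset.map_map] at this
  exact this.symm

theorem iterate_derivative_eval_eq_factorial_mul_taylor_coeff [CommSemiring R]
    (f : R[X]) (r : R) (j : ℕ) :
    (derivative^[j] f).eval r = j ! * (taylor r f).coeff j := by
  rw [← factorial_smul_hasseDeriv, taylor_coeff, LinearMap.smul_apply, eval_smul, nsmul_eq_mul]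

theorem taylor_prod_X_sub_C_s17 [CommRing R] {ι : Type*} [Fintype ι] [DecidableEq ι]
    (z : ι → R) (k : ι) :
    taylor (z k) (∏ i, (X - C (z i))) = X * ∏ i ∈ univ.erase k, (X + C (z k - z i)) := by
  have h : ∀ i, (X - C (z i)).comp (X + C (z k)) = X + C (z k - z i) := fun i => by
    rw [sub_comp, X_comp, C_comp, C_sub]; ring
  rw [taylor_apply, prod_comp, prod_congr rfl fun i _ => h i,
    ← mul_prod_erase univ _ (mem_univ k), sub_self, C_0, add_zero]

theorem coeff_prod_one_add_C_mul_X [CommSemiring R] {ι : Type*} (s : Finset ι) (a : ι → R)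
    (m : ℕ) :
    (∏ i ∈ s, (1 + C (a i) * X)).coeff m = ∑ t ∈ s.powersetCard m, ∏ i ∈ t, a i := by
  classical
  simp only [prod_one_add, prod_mul_distrib, prod_const, ← map_prod, finsetSum_coeff,
    coeff_C_mul_X_pow, powersetCard_eq_filter, sum_filter, eq_comm (a := m)]

theorem coeff_prod_X_add_C_eq_prod_mul_sum_prod_inv {K : Type*} [Field K] {ι : Type*}
    (s : Finset ι) {w : ι → K} (hw : ∀ i ∈ s, w i ≠ 0) (m : ℕ) :
    (∏ i ∈ s, (X + C (w i))).coeff m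
      = (∏ i ∈ s, w i) * ∑ t ∈ s.powersetCard m, ∏ i ∈ t, (w i)⁻¹ := by
  have h : ∀ i ∈ s, X + C (w i) = C (w i) * (1 + C (w i)⁻¹ * X) := fun i hi => by
    rw [mul_add, mul_one, ← mul_assoc, ← C_mul, mul_inv_cancel₀ (hw i hi), C_1, one_mul,
      add_comm]
  rw [prod_congr rfl h, prod_mul_distrib, ← map_prod, coeff_C_mul, coeff_prod_one_add_C_mul_X]

section CriticalPoints

variable {K : Type*} [Field K] [CharZero K] {n : ℕ} {p : K[X]} {z : Fin n → K}

theorem derivative_eq_C_mul_prod_X_sub_C_of_critical (hp : p.Monic) (hdeg : p.natDegree = n + 1)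
    (hz : Function.Injective z) (hcrit : ∀ i, (derivative p).eval (z i) = 0) :
    derivative p = C ((n : K) + 1) * ∏ i, (X - C (z i)) := by
  have hdeg' : (derivative p).natDegree = Fintype.card (Fin n) := by
    rw [natDegree_derivative, hdeg, Fintype.card_fin, Nat.add_sub_cancel]
  rw [eq_C_leadingCoeff_mul_prod_X_sub_C_of_injective_s17 hdeg' hz hcrit, leadingCoeff_derivative,
    hp.leadingCoeff, one_mul, hdeg, Nat.cast_add_one]

theorem iterate_derivative_eval_critical_point (hp : p.Monic) (hdeg : p.natDegree = n + 1)
    (hz : Function.Injective z) (hcrit : ∀ i, (derivative p).eval (z i) = 0) (k : Fin n)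
    (j : ℕ) :
    (derivative^[j + 2] p).eval (z k)
      = (j + 1)! * ((n + 1) * (∏ i ∈ univ.erase k, (z k - z i)) *
          ∑ S ∈ (univ.erase k).powersetCard j, ∏ i ∈ S, (z k - z i)⁻¹) := by
  have hw : ∀ i ∈ univ.erase k, z k - z i ≠ 0 := fun i hi =>
    sub_ne_zero.mpr (hz.ne (ne_of_mem_erase hi).symm)
  rw [Function.iterate_succ_apply, iterate_derivative_eval_eq_factorial_mul_taylor_coeff,
    derivative_eq_C_mul_prod_X_sub_C_of_critical hp hdeg hz hcrit, taylor_mul, taylor_C,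
    taylor_prod_X_sub_C_s17, coeff_C_mul, coeff_X_mul,
    coeff_prod_X_add_C_eq_prod_mul_sum_prod_inv _ hw, mul_assoc]

end CriticalPoints

end Polynomial

theorem stmt_17_general (n : ℕ) (p : Polynomial ℂ)
    (hp : p.Monic) (hdeg : p.natDegree = n + 1)
    (z : Fin n → ℂ) (hz : Function.Injective z)
    (hcrit : ∀ i, (derivative p).eval (z i) = 0)
    (k : Fin n) (m : ℕ) :
    ((derivative^[m + 2] p).eval (z k)) / ((derivative^[2] p).eval (z k))
      = (Nat.factorial (m + 1) : ℂ) *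
          ∑ S ∈ (univ.erase k).powersetCard m, 1 / ∏ j ∈ S, (z k - z j) := by
  have hw : ∏ i ∈ univ.erase k, (z k - z i) ≠ 0 := prod_ne_zero_iff.mpr fun i hi =>
    sub_ne_zero.mpr (hz.ne (ne_of_mem_erase hi).symm)
  have hn : (n : ℂ) + 1 ≠ 0 := by exact_mod_cast n.succ_ne_zero
  rw [iterate_derivative_eval_critical_point hp hdeg hz hcrit k m,
    iterate_derivative_eval_critical_point hp hdeg hz hcrit k 0]
  simp only [powersetCard_zero, sum_singleton, prod_empty, inv_one, mul_one, zero_add,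
    Nat.factorial_one, Nat.cast_one, one_mul, one_div, prod_inv_distrib]
  field_simp

/-- Identity (3.2): for every index `k` and every integer `m ≥ 1`,
`λ^{{(m+2)}}(z_k)/λ''(z_k) = (m+1)! · ∑ 1/((z_k − z_j₁)⋯(z_k − z_jₘ))`, the sum
being over all `m`-element subsets of `{{1,…,n}} \ {{k}}`. -/
theorem stmt_17 (n : ℕ) (hn : 1 ≤ n) (p : Polynomial ℂ)
    (hp : p.Monic) (hdeg : p.natDegree = n + 1)
    (z : Fin n → ℂ) (hz : Function.Injective z)
    (hcrit : ∀ i, (derivative p).eval (z i) = 0)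
    (hnd : ∀ i, (derivative^[2] p).eval (z i) ≠ 0)
    (C : Fin n → ℕ → ℂ)
    (hC : ∀ i k, C i k = ((derivative^[k] p).eval (z i)) / ((derivative^[2] p).eval (z i)))
    (k : Fin n) (m : ℕ) (hm : 1 ≤ m) :
    ((derivative^[m + 2] p).eval (z k)) / ((derivative^[2] p).eval (z k))
      = (Nat.factorial (m + 1) : ℂ) *
          ∑ S ∈ (univ.erase k).powersetCard m, 1 / ∏ j ∈ S, (z k - z j) :=
  stmt_17_general n p hp hdeg z hz hcrit k m
end
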